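/- Let y ∈ A⟦t⟧ with constant coefficient 1 satisfy L(y) = 0. For every 0 ≤ i ≤ n−4 there exists g ∈ A⟦t⟧ with g·P·y² = ∫(t^i·y²), and for this (unique) g one has ∂_i y = y·∫g. This is the formal power series version of the integral representation ∂y/∂ρ_i = y(t)·∫₀^t [ ∫₀^{t₁} t₂^i y(t₂)² dt₂ ] / ( y(t₁)²·P(t₁) ) dt₁. -/

import Mathlib

/-!
Differentiating `L y = 0` with respect to `ρ_i` gives `L (∂_i y) = t^i y`, because `P` does not
involve the accessory parameters and `∂_i P1 = -t^i`. Reduction of order,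
`y · L (y F) = y F · L y + (P y² F')'`, shows that `y ∫ g` solves the same equation. Their
difference `u` solves `L u = 0` with `u(0) = 0`; the Wronskian `P (u' y - u y')` has derivative
`y L u - u L y = 0` and vanishes at `0` because `P(0) = 0`, so `u' y = u y'`, i.e. `(u / y)' = 0`,
and `u = 0`. As for `g`: `P y² = t · P̂ y²` with `P̂ y²` invertible since `P̂(0) = κ ≠ 0`, and
`∫ (t^i y²)` is divisible by `t`.
-/

noncomputable section

open PowerSeries

/-- The ring of accessory parameters: polynomials in `ρ_0, …, ρ_{n-4}` over `ℂ`. -/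
abbrev AccRing (n : ℕ) : Type := MvPolynomial (Fin (n - 3)) ℂ

/-- Coefficientwise partial derivative of a power series with respect to the
accessory parameter `ρ_i`. -/
noncomputable def pd {n : ℕ} (i : Fin (n - 3)) (u : PowerSeries (AccRing n)) :
    PowerSeries (AccRing n) :=
  PowerSeries.mk fun m => MvPolynomial.pderiv i (PowerSeries.coeff m u)

/-- The polynomial `P = t·∏_{j=1}^{n-2}(t - α_j)`, viewed in `A⟦t⟧`. -/
noncomputable def Ppoly (n : ℕ) (α : Fin (n - 2) → ℂ) : PowerSeries (AccRing n) :=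
  X * ∏ j, (X - C (R := AccRing n) (MvPolynomial.C (α j)))

/-- The polynomial `P̂ = P/t = ∏_{j=1}^{n-2}(t - α_j)`, viewed in `A⟦t⟧`. -/
noncomputable def PhatPoly (n : ℕ) (α : Fin (n - 2) → ℂ) : PowerSeries (AccRing n) :=
  ∏ j, (X - C (R := AccRing n) (MvPolynomial.C (α j)))

/-- `κ = P̂(0) = (-1)^(n-2) ∏ α_j`. -/
noncomputable def kappa (n : ℕ) (α : Fin (n - 2) → ℂ) : ℂ :=
  (-1) ^ (n - 2) * ∏ j, α j

/-- `P1 = (1 - n/2)²·t^(n-3) - ∑_{i=0}^{n-4} ρ_i·t^i`, viewed in `A⟦t⟧`. -/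
noncomputable def P1poly (n : ℕ) : PowerSeries (AccRing n) :=
  C (R := AccRing n) (MvPolynomial.C ((1 - (n : ℂ) / 2) ^ 2)) * X ^ (n - 3)
    - ∑ i : Fin (n - 3), C (R := AccRing n) (MvPolynomial.X i) * X ^ (i : ℕ)

/-- The differential operator `L u = (P·u')' + P1·u`. -/
noncomputable def Lop (n : ℕ) (α : Fin (n - 2) → ℂ) (u : PowerSeries (AccRing n)) :
    PowerSeries (AccRing n) :=
  derivative (AccRing n) (Ppoly n α * derivative (AccRing n) u) + P1poly n * u

/-- Formal antiderivative with zero constant term. -/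
noncomputable def integ {A : Type*} [CommRing A] [Algebra ℚ A] (u : PowerSeries A) :
    PowerSeries A :=
  PowerSeries.mk fun m => if m = 0 then 0 else ((m : ℚ)⁻¹) • PowerSeries.coeff (R := A) (m - 1) u

/-- Formal substitution of the power series `S` (with zero constant term) into `G`. -/
noncomputable def substS {A : Type*} [CommSemiring A] (S G : PowerSeries A) : PowerSeries A :=
  PowerSeries.mk fun m =>
    ∑ j ∈ Finset.range (m + 1), PowerSeries.coeff (R := A) j G * PowerSeries.coeff (R := A) m (S ^ j)

/-- The operator `θ G = X·dG/dX`. -/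
noncomputable def theta {A : Type*} [CommRing A] (G : PowerSeries A) : PowerSeries A :=
  PowerSeries.X * PowerSeries.derivative A G

/-- The formal Eichler integral: divide the `m`-th coefficient by `m³`. -/
noncomputable def eich {A : Type*} [CommRing A] [Algebra ℚ A] (H : PowerSeries A) :
    PowerSeries A :=
  PowerSeries.mk fun m => (((m : ℚ) ^ 3)⁻¹) • PowerSeries.coeff (R := A) m H

/-- Formal exponential of a power series with zero constant term. -/
noncomputable def expS {A : Type*} [CommRing A] [Algebra ℚ A] (S : PowerSeries A) :
    PowerSeries A :=
  substS S (PowerSeries.exp A)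

namespace Derivation

variable {R A : Type*} [CommRing R] [CommRing A] [Algebra R A] (D : Derivation R A A)

def mapCoeffsPowerSeries : Derivation R A⟦X⟧ A⟦X⟧ where
  toFun u := PowerSeries.mk fun m => D (coeff m u)
  map_add' u v := by ext; simp
  map_smul' r u := by ext; simp
  map_one_eq_zero' := by ext m; simp [coeff_one, apply_ite D]
  leibniz' u v := by
    ext m
    dsimp only [LinearMap.coe_mk, AddHom.coe_mk]
    rw [smul_eq_mul, smul_eq_mul, mul_comm v, map_add, coeff_mk, coeff_mul, coeff_mul, coeff_mul,
      map_sum, ← Finset.sum_add_distrib]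
    refine Finset.sum_congr rfl fun p _ => ?_
    simp only [coeff_mk, leibniz, smul_eq_mul]
    ring

@[simp]
lemma coeff_mapCoeffsPowerSeries (u : A⟦X⟧) (m : ℕ) :
    coeff m (D.mapCoeffsPowerSeries u) = D (coeff m u) := by
  simp [mapCoeffsPowerSeries]

lemma constantCoeff_mapCoeffsPowerSeries (u : A⟦X⟧) :
    constantCoeff (D.mapCoeffsPowerSeries u) = D (constantCoeff u) := by
  rw [← coeff_zero_eq_constantCoeff_apply, coeff_mapCoeffsPowerSeries,
    coeff_zero_eq_constantCoeff_apply]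

@[simp]
lemma mapCoeffsPowerSeries_C (a : A) : D.mapCoeffsPowerSeries (C a) = C (D a) := by
  ext m
  simp [coeff_C, apply_ite D]

@[simp]
lemma mapCoeffsPowerSeries_X : D.mapCoeffsPowerSeries (X : A⟦X⟧) = 0 := by
  ext m
  simp [coeff_X, apply_ite D]

lemma mapCoeffsPowerSeries_map_algebraMap (q : R⟦X⟧) :
    D.mapCoeffsPowerSeries (map (algebraMap R A) q) = 0 := by
  ext m
  simp

lemma mapCoeffsPowerSeries_derivative (u : A⟦X⟧) :
    D.mapCoeffsPowerSeries (d⁄dX A u) = d⁄dX A (D.mapCoeffsPowerSeries u) := by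
  ext m
  simp [coeff_derivative, mul_comm]

end Derivation

namespace PowerSeries

section Integral

variable {A : Type*} [CommRing A] [Algebra ℚ A]

lemma constantCoeff_integ (u : A⟦X⟧) : constantCoeff (integ u) = 0 := by
  simp [integ, constantCoeff_mk]

lemma derivative_integ (u : A⟦X⟧) : d⁄dX A (integ u) = u := by
  ext m
  rw [coeff_derivative, integ, coeff_mk, if_neg m.succ_ne_zero, Nat.add_sub_cancel,
    smul_mul_assoc, ← Nat.cast_succ, ← nsmul_eq_mul', ← Nat.cast_smul_eq_nsmul ℚ, smul_smul,
    inv_mul_cancel₀ (by positivity), one_smul]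

end Integral

lemma exists_mul_X_mul_eq {A : Type*} [CommRing A] {q f : A⟦X⟧} (hq : IsUnit q)
    (hf : constantCoeff f = 0) : ∃ g, g * (X * q) = f := by
  obtain ⟨w, rfl⟩ := X_dvd_iff.mpr hf
  exact ⟨w * ↑hq.unit⁻¹, by rw [mul_left_comm, mul_assoc, hq.val_inv_mul, mul_one]⟩

lemma eq_zero_of_derivative_mul_sub_mul_derivative_eq_zero {A : Type*} [CommRing A]
    [IsAddTorsionFree A] {u y : A⟦X⟧} (hy : IsUnit y)
    (hW : d⁄dX A u * y - u * d⁄dX A y = 0) (hu0 : constantCoeff u = 0) : u = 0 := by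
  obtain ⟨Y, rfl⟩ := hy
  obtain ⟨v, rfl⟩ : ∃ v, u = v * Y := ⟨u * ↑Y⁻¹, by simp⟩
  rw [map_mul] at hu0
  have hv0 : constantCoeff v = 0 := (Y.isUnit.map constantCoeff).mul_left_eq_zero.mp hu0
  have hv' : d⁄dX A v * (↑Y * ↑Y) = 0 := by
    rw [← hW, Derivation.leibniz, smul_eq_mul, smul_eq_mul]
    ring
  have hv : v = 0 := derivative.ext
    (by rw [(Y * Y).isUnit.mul_left_eq_zero.mp hv', map_zero]) (by rw [hv0, map_zero])
  rw [hv, zero_mul]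

section SturmLiouville

variable {A : Type*} [CommRing A]

def sturmLiouville (P Q u : A⟦X⟧) : A⟦X⟧ := d⁄dX A (P * d⁄dX A u) + Q * u

variable (P Q : A⟦X⟧)

lemma sturmLiouville_sub (u v : A⟦X⟧) :
    sturmLiouville P Q (u - v) = sturmLiouville P Q u - sturmLiouville P Q v := by
  simp only [sturmLiouville, map_sub, mul_sub]
  ring

lemma derivative_wronskian (u y : A⟦X⟧) :
    d⁄dX A (P * (d⁄dX A u * y - u * d⁄dX A y)) =
      y * sturmLiouville P Q u - u * sturmLiouville P Q y := by
  simp only [sturmLiouville, map_sub, Derivation.leibniz, smul_eq_mul]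
  ring

lemma mul_sturmLiouville_mul (y F : A⟦X⟧) :
    y * sturmLiouville P Q (y * F) =
      y * F * sturmLiouville P Q y + d⁄dX A (P * y ^ 2 * d⁄dX A F) := by
  simp only [sturmLiouville, sq, map_add, Derivation.leibniz, smul_eq_mul]
  ring

variable {P Q}

lemma _root_.Derivation.mapCoeffsPowerSeries_sturmLiouville {R : Type*} [CommRing R]
    [Algebra R A] (D : Derivation R A A) (hP : D.mapCoeffsPowerSeries P = 0) (u : A⟦X⟧) :
    D.mapCoeffsPowerSeries (sturmLiouville P Q u) =
      sturmLiouville P Q (D.mapCoeffsPowerSeries u) + D.mapCoeffsPowerSeries Q * u := by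
  simp only [sturmLiouville, map_add, Derivation.leibniz, D.mapCoeffsPowerSeries_derivative, hP,
    smul_eq_mul, mul_zero, add_zero, map_zero]
  ring

lemma sturmLiouville_mul_integ [Algebra ℚ A] {y g f : A⟦X⟧} (hy : IsUnit y)
    (hLy : sturmLiouville P Q y = 0) (hg : d⁄dX A (g * P * y ^ 2) = y * f) :
    sturmLiouville P Q (y * integ g) = f := by
  apply hy.mul_left_cancel
  rw [mul_sturmLiouville_mul, hLy, derivative_integ, mul_zero, zero_add, ← hg]
  congr 1
  ring

lemma eq_zero_of_sturmLiouville_eq_zero [NoZeroDivisors A] [IsAddTorsionFree A] {u y : A⟦X⟧}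
    (hP : P ≠ 0) (hP0 : constantCoeff P = 0) (hy : IsUnit y)
    (hLy : sturmLiouville P Q y = 0) (hLu : sturmLiouville P Q u = 0)
    (hu0 : constantCoeff u = 0) : u = 0 := by
  have hW : P * (d⁄dX A u * y - u * d⁄dX A y) = 0 :=
    derivative.ext (by rw [derivative_wronskian P Q, hLy, hLu]; simp) (by simp [hP0])
  exact eq_zero_of_derivative_mul_sub_mul_derivative_eq_zero hy
    ((mul_eq_zero.mp hW).resolve_left hP) hu0

end SturmLiouville

end PowerSeries

section AccessoryParameters

variable {n : ℕ} (α : Fin (n - 2) → ℂ)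

lemma pd_eq_mapCoeffsPowerSeries (i : Fin (n - 3)) :
    pd i = (MvPolynomial.pderiv i).mapCoeffsPowerSeries := by
  funext u
  ext m
  simp [pd]

lemma Lop_eq_sturmLiouville : Lop n α = sturmLiouville (Ppoly n α) (P1poly n) := rfl

lemma Ppoly_eq_X_mul_PhatPoly : Ppoly n α = X * PhatPoly n α := rfl

lemma Ppoly_eq_map :
    Ppoly n α = map (algebraMap ℂ (AccRing n)) (X * ∏ j, (X - C (α j))) := by
  simp [Ppoly, map_prod, MvPolynomial.algebraMap_eq]

lemma constantCoeff_Ppoly : constantCoeff (Ppoly n α) = 0 := by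
  rw [Ppoly, map_mul, constantCoeff_X, zero_mul]

lemma constantCoeff_PhatPoly : constantCoeff (PhatPoly n α) = MvPolynomial.C (kappa n α) := by
  simp [PhatPoly, kappa, map_prod, Finset.prod_neg]

variable {α}

lemma kappa_ne_zero (hα0 : ∀ j, α j ≠ 0) : kappa n α ≠ 0 :=
  mul_ne_zero (pow_ne_zero _ (neg_ne_zero.mpr one_ne_zero))
    (Finset.prod_ne_zero_iff.mpr fun j _ => hα0 j)

lemma isUnit_PhatPoly (hα0 : ∀ j, α j ≠ 0) : IsUnit (PhatPoly n α) := by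
  rw [isUnit_iff_constantCoeff, constantCoeff_PhatPoly]
  exact (isUnit_iff_ne_zero.mpr (kappa_ne_zero hα0)).map MvPolynomial.C

lemma Ppoly_ne_zero (hα0 : ∀ j, α j ≠ 0) : Ppoly n α ≠ 0 :=
  mul_ne_zero X_ne_zero (isUnit_PhatPoly hα0).ne_zero

variable (i : Fin (n - 3))

lemma pd_Ppoly : pd i (Ppoly n α) = 0 := by
  rw [pd_eq_mapCoeffsPowerSeries, Ppoly_eq_map, Derivation.mapCoeffsPowerSeries_map_algebraMap]

lemma pd_P1poly : pd i (P1poly n) = -X ^ (i : ℕ) := by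
  simp [pd_eq_mapCoeffsPowerSeries, P1poly, Derivation.leibniz, Derivation.leibniz_pow,
    MvPolynomial.pderiv_X, Pi.single_apply]

lemma Lop_pd {y : PowerSeries (AccRing n)} (hy : Lop n α y = 0) :
    Lop n α (pd i y) = X ^ (i : ℕ) * y := by
  have h := (MvPolynomial.pderiv i).mapCoeffsPowerSeries_sturmLiouville
    (Q := P1poly n) (pd_Ppoly (α := α) i) y
  rw [← Lop_eq_sturmLiouville, hy, map_zero, ← pd_eq_mapCoeffsPowerSeries, pd_P1poly, neg_mul,
    eq_comm, add_neg_eq_zero] at h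
  exact h

end AccessoryParameters

theorem stmt4_general (n : ℕ) (α : Fin (n - 2) → ℂ)
    (hα0 : ∀ j, α j ≠ 0)
    (y : PowerSeries (AccRing n))
    (hy1 : constantCoeff (R := AccRing n) y = 1) (hy : Lop n α y = 0)
    (i : Fin (n - 3)) :
    (∃ g : PowerSeries (AccRing n),
        g * Ppoly n α * y ^ 2 = integ (X ^ (i : ℕ) * y ^ 2)) ∧
    (∀ g : PowerSeries (AccRing n),
        g * Ppoly n α * y ^ 2 = integ (X ^ (i : ℕ) * y ^ 2) →
          pd i y = y * integ g) := by
  have hyu : IsUnit y := isUnit_iff_constantCoeff.mpr (hy1 ▸ isUnit_one)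
  refine ⟨?_, fun g hg => ?_⟩
  · obtain ⟨g, hg⟩ := exists_mul_X_mul_eq ((isUnit_PhatPoly hα0).mul (hyu.pow 2))
      (constantCoeff_integ (X ^ (i : ℕ) * y ^ 2))
    exact ⟨g, by rw [← hg, Ppoly_eq_X_mul_PhatPoly]; ring⟩
  · have hL : Lop n α (pd i y - y * integ g) = 0 := by
      have hyg := sturmLiouville_mul_integ hyu hy (f := X ^ (i : ℕ) * y)
        (by rw [hg, derivative_integ]; ring)
      rw [Lop_eq_sturmLiouville, sturmLiouville_sub, hyg, ← Lop_eq_sturmLiouville, Lop_pd i hy,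
        sub_self]
    have h0 : constantCoeff (pd i y - y * integ g) = 0 := by
      simp [pd_eq_mapCoeffsPowerSeries, Derivation.constantCoeff_mapCoeffsPowerSeries, hy1,
        constantCoeff_integ]
    exact sub_eq_zero.mp
      (eq_zero_of_sturmLiouville_eq_zero (Ppoly_ne_zero hα0) (constantCoeff_Ppoly α) hyu hy hL h0)

/-- integral representation of `∂_i y`: there is `g` with
`g·P·y² = ∫(t^i·y²)`, and for this `g` one has `∂_i y = y·∫ g`. -/
theorem stmt4 (n : ℕ) (hn : 4 ≤ n) (α : Fin (n - 2) → ℂ)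
    (hα0 : ∀ j, α j ≠ 0) (hαinj : Function.Injective α)
    (y : PowerSeries (AccRing n))
    (hy1 : constantCoeff (R := AccRing n) y = 1) (hy : Lop n α y = 0)
    (i : Fin (n - 3)) :
    (∃ g : PowerSeries (AccRing n),
        g * Ppoly n α * y ^ 2 = integ (X ^ (i : ℕ) * y ^ 2)) ∧
    (∀ g : PowerSeries (AccRing n),
        g * Ppoly n α * y ^ 2 = integ (X ^ (i : ℕ) * y ^ 2) →
          pd i y = y * integ g) :=
  stmt4_general n α hα0 y hy1 hy i
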